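/- arXiv:2007.10314 — 2 statements merged into one kernel-verified Lean document; each statement's English description precedes it below -/
import Mathlib

section
/- On ℝ^{2n} with the folded symplectic form ω = t dt ∧ dq + Σ_{i=2}^n dx_i ∧ dy_i, if f is a folded function (i.e., f = t²f₁ + f₂(x₂,...,y_n)), then its Hamiltonian vector field X_f is tangent to the hypersurface Z = {t = 0}. -/
open scoped BigOperators

/-- The point/tangent space `ℝ^{2n}` with coordinates `(t, q, x, y)`. -/
abbrev FoldedSpace (m : ℕ) := ℝ × ℝ × (Fin m → ℝ) × (Fin m → ℝ)

/-- The folded symplectic form `ω = t dt ∧ dq + Σᵢ dxᵢ ∧ dyᵢ`. -/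
def foldedForm (m : ℕ) (p u v : FoldedSpace m) : ℝ :=
  p.1 * (u.1 * v.2.1 - v.1 * u.2.1) +
    ∑ i : Fin m, (u.2.2.1 i * v.2.2.2 i - v.2.2.1 i * u.2.2.2 i)

/-- If `f` is a folded function, i.e. `f = t² f₁ + f₂(x, y)`
with `f₁, f₂` smooth, then any smooth Hamiltonian vector field `X_f`
(satisfying `ι_{X_f} ω = -df`) is tangent to `Z = {t = 0}`: its
`dt`-component (first component) vanishes at every point of `Z`. -/
theorem folded_hamiltonian_tangent_to_fold (m : ℕ)
    (f f₁ : FoldedSpace m → ℝ) (f₂ : (Fin m → ℝ) × (Fin m → ℝ) → ℝ)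
    (hf₁ : ContDiff ℝ (⊤ : ℕ∞) f₁) (hf₂ : ContDiff ℝ (⊤ : ℕ∞) f₂)
    (hf : ∀ p : FoldedSpace m, f p = p.1 ^ 2 * f₁ p + f₂ (p.2.2.1, p.2.2.2))
    (X : FoldedSpace m → FoldedSpace m) (hX : ContDiff ℝ (⊤ : ℕ∞) X)
    (hXf : ∀ p v, foldedForm m p (X p) v = - fderiv ℝ f p v) :
    ∀ p : FoldedSpace m, p.1 = 0 → (X p).1 = 0 := by
  -- direction ∂/∂q
  set e : FoldedSpace m := (0, 1, 0, 0) with he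
  have hfeq : f = fun p : FoldedSpace m => p.1 * p.1 * f₁ p + f₂ p.2.2 := by
    funext p; rw [hf]; ring_nf
  -- key pointwise identity
  have hkey : ∀ p : FoldedSpace m, p.1 * (X p).1 = -(p.1 ^ 2 * fderiv ℝ f₁ p e) := by
    intro p
    have h1 : HasFDerivAt (fun p : FoldedSpace m => p.1 * p.1)
        (p.1 • (ContinuousLinearMap.fst ℝ ℝ (ℝ × (Fin m → ℝ) × (Fin m → ℝ))) +
         p.1 • (ContinuousLinearMap.fst ℝ ℝ (ℝ × (Fin m → ℝ) × (Fin m → ℝ)))) p :=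
      hasFDerivAt_fst.mul hasFDerivAt_fst
    have h2 : HasFDerivAt f₁ (fderiv ℝ f₁ p) p :=
      (hf₁.differentiable (by simp) p).hasFDerivAt
    have h3 : HasFDerivAt (fun p : FoldedSpace m => p.2.2)
        ((ContinuousLinearMap.snd ℝ ℝ _).comp
          (ContinuousLinearMap.snd ℝ ℝ _)) p := hasFDerivAt_snd.snd
    have h4 : HasFDerivAt (fun p : FoldedSpace m => f₂ p.2.2)
        ((fderiv ℝ f₂ p.2.2).comp ((ContinuousLinearMap.snd ℝ ℝ _).comp
          (ContinuousLinearMap.snd ℝ ℝ _))) p :=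
      ((hf₂.differentiable (by simp) p.2.2).hasFDerivAt).comp p h3
    have h5 := ((h1.fun_mul h2).fun_add h4)
    rw [← hfeq] at h5
    have hfd := h5.fderiv
    have hfe : fderiv ℝ f p e = p.1 ^ 2 * fderiv ℝ f₁ p e := by
      rw [hfd]
      simp [he]
      rw [show ((0, 0) : (Fin m → ℝ) × (Fin m → ℝ)) = 0 from rfl, map_zero]; ring
    have := hXf p e
    simp only [foldedForm, he] at this
    simp only [Pi.zero_apply] at this
    rw [hfe] at this
    simpa using this
  -- off the fold, (X p).1 equals a continuous function
  set g : FoldedSpace m → ℝ := fun p => -(p.1 * fderiv ℝ f₁ p e) with hg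
  have hgc : Continuous g := by
    apply Continuous.neg
    exact continuous_fst.mul ((hf₁.continuous_fderiv (by simp)).clm_apply continuous_const)
  have hXc : Continuous fun p : FoldedSpace m => (X p).1 :=
    (hX.continuous).fst
  have hs : Dense {p : FoldedSpace m | p.1 ≠ 0} := by
    have : {p : FoldedSpace m | p.1 ≠ 0} = {x : ℝ | x ≠ 0} ×ˢ Set.univ := by
      ext p; simp [Set.mem_prod]
    rw [this]
    exact (dense_compl_singleton (0 : ℝ)).prod dense_univ
  have heq : (fun p : FoldedSpace m => (X p).1) = g := by
    apply hXc.ext_on hs hgc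
    intro p hp
    have hp' : p.1 ≠ 0 := hp
    have h2 : p.1 * (X p).1 = p.1 * g p := by
      rw [hkey p]; simp only [hg]; ring
    exact mul_left_cancel₀ hp' h2
  intro p hp0
  have : (X p).1 = g p := congrFun heq p
  rw [this, hg]
  simp [hp0]
end

section
/- On S² with folded symplectic form ω = h dh ∧ dθ and folded function f = h² cos θ, the Hamiltonian vector field is X_f = h sin θ ∂/∂h + 2 cos θ ∂/∂θ, which vanishes at the points of the critical circle Z = {h = 0} where cos θ = 0. In particular, there exists a folded integrable system on a surface whose Hamiltonian vector field has zeros on the folding hypersurface, which cannot occur for the Hamiltonian vector field of a b-function c log|h| + g with c ≠ 0 on a b-symplectic surface. -/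
noncomputable section

/-- The folded symplectic form `ω = h dh ∧ dθ` on the `(h, θ)`-coordinates of
`S²`. -/
def foldedForm2 (p u v : ℝ × ℝ) : ℝ := p.1 * (u.1 * v.2 - v.1 * u.2)

/-- The folded function `f = h² cos θ`. -/
def foldedF (p : ℝ × ℝ) : ℝ := p.1 ^ 2 * Real.cos p.2

/-- Its Hamiltonian vector field `X_f = h sin θ ∂/∂h + 2 cos θ ∂/∂θ`. -/
def foldedXF (p : ℝ × ℝ) : ℝ × ℝ := (p.1 * Real.sin p.2, 2 * Real.cos p.2)

lemma foldedF_hasFDerivAt (p : ℝ × ℝ) :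
    HasFDerivAt foldedF
      ((2 * p.1 * Real.cos p.2) • (ContinuousLinearMap.fst ℝ ℝ ℝ)
        + (-(p.1 ^ 2 * Real.sin p.2)) • (ContinuousLinearMap.snd ℝ ℝ ℝ)) p := by
  have h1 : HasFDerivAt (fun q : ℝ × ℝ => q.1 ^ 2)
      ((2 * p.1) • (ContinuousLinearMap.fst ℝ ℝ ℝ)) p := by
    have := (hasDerivAt_pow 2 p.1).comp_hasFDerivAt p
      (hasFDerivAt_fst (𝕜 := ℝ) (p := p) (E := ℝ) (F := ℝ))
    simpa [pow_one, mul_comm, Function.comp_def] using this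
  have h2 : HasFDerivAt (fun q : ℝ × ℝ => Real.cos q.2)
      ((-Real.sin p.2) • (ContinuousLinearMap.snd ℝ ℝ ℝ)) p :=
    (Real.hasDerivAt_cos p.2).comp_hasFDerivAt p
      (hasFDerivAt_snd (𝕜 := ℝ) (p := p) (E := ℝ) (F := ℝ))
  have h3 := h1.mul h2
  apply h3.congr_fderiv
  refine ContinuousLinearMap.ext fun v => ?_
  simp [ContinuousLinearMap.add_apply, ContinuousLinearMap.smul_apply]
  ring

/-- On `S²` with folded symplectic form `ω = h dh ∧ dθ`, the
folded function `f = h² cos θ` has Hamiltonian vector field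
`X_f = h sin θ ∂/∂h + 2 cos θ ∂/∂θ`, which vanishes at the points of the
critical circle `Z = {h = 0}` where `cos θ = 0`.  In particular there is a
folded integrable system on a surface whose Hamiltonian vector field has
zeros on the folding hypersurface; this cannot happen for the Hamiltonian
vector field of a b-function `c log|h| + g` (`c ≠ 0`, `g` smooth) on a
b-symplectic surface, whose `∂/∂θ`-component `c + h ∂g/∂h` never vanishes
along `Z`. -/
theorem folded_system_not_b_modelable :
    -- ι_{X_f} ω = -df
    (∀ p v : ℝ × ℝ, foldedForm2 p (foldedXF p) v = - fderiv ℝ foldedF p v) ∧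
    -- X_f vanishes at the points of Z where cos θ = 0
    (∀ p : ℝ × ℝ, p.1 = 0 → Real.cos p.2 = 0 → foldedXF p = 0) ∧
    (∃ p : ℝ × ℝ, p.1 = 0 ∧ foldedXF p = 0) ∧
    -- whereas the b-Hamiltonian vector field of c log|h| + g has
    -- θ-component c + h ∂g/∂h, nonvanishing on Z = {h = 0}
    (∀ c : ℝ, c ≠ 0 → ∀ g : ℝ × ℝ → ℝ, ContDiff ℝ (⊤ : ℕ∞) g →
      ∀ p : ℝ × ℝ, p.1 = 0 → c + p.1 * fderiv ℝ g p (1, 0) ≠ 0) := by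
  refine ⟨?_, ?_, ?_, ?_⟩
  · intro p v
    rw [(foldedF_hasFDerivAt p).fderiv]
    simp [foldedForm2, foldedXF, ContinuousLinearMap.add_apply,
      ContinuousLinearMap.smul_apply]
    ring
  · intro p h1 h2
    simp [foldedXF, h1, h2]
  · exact ⟨(0, Real.pi / 2), rfl, by simp [foldedXF]⟩
  · intro c hc g _ p hp
    simpa [hp] using hc
end
end
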